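/- The generating function for Dyck paths whose sequence of peak heights is strictly increasing is Σ_{a≥0} z^a [a]_z!, where [a]_z! = [a]_z [a−1]_z ⋯ [1]_z and [i]_z = 1 + z + ⋯ + z^{i−1}; moreover the number of such paths of semilength n equals the number of compositions (c₁,…,c_m) of n with c_i ≤ i for all i. -/

import Mathlib

/-- Height of the vertex after the first `j` steps of the path `w`
(`true` = up-step `u`, `false` = down-step `d`). -/
def hgt (w : List Bool) (j : ℕ) : ℤ :=
  ((w.take j).count true : ℤ) - ((w.take j).count false : ℤ)

/-- `w` is a Dyck word: equally many `u`'s and `d`'s, and every prefix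
has at least as many `u`'s as `d`'s. -/
def IsDyckWord (w : List Bool) : Prop :=
  w.count true = w.count false ∧ ∀ j, 0 ≤ hgt w j

instance : DecidablePred IsDyckWord := fun w => by
  have : IsDyckWord w ↔ (w.count true = w.count false ∧
      ∀ j ∈ List.range (w.length + 1), 0 ≤ hgt w j) := by
    constructor
    · rintro ⟨h1, h2⟩; exact ⟨h1, fun j _ => h2 j⟩
    · rintro ⟨h1, h2⟩
      refine ⟨h1, fun j => ?_⟩
      rcases le_or_gt j w.length with h | h
      · exact h2 j (List.mem_range.mpr (Nat.lt_succ_of_le h))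
      · have : w.take j = w := List.take_of_length_le h.le
        have hw : hgt w j = hgt w w.length := by
          unfold hgt
          rw [this, List.take_of_length_le (le_refl _)]
        rw [hw]
        exact h2 w.length (List.mem_range.mpr (Nat.lt_succ_of_le (le_refl _)))
  exact decidable_of_iff' _ this

/-- there is a peak (an occurrence of `ud`) at positions `i, i+1`. -/
def isPeakB (w : List Bool) (i : ℕ) : Bool :=
  w.getD i false && !(w.getD (i+1) true)

/-- there is a valley (an occurrence of `du`) at positions `i, i+1`. -/
def isValleyB (w : List Bool) (i : ℕ) : Bool :=
  !(w.getD i true) && w.getD (i+1) false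

/-- length of the maximal run of `u`'s ending at position `i`. -/
def upRunL (w : List Bool) (i : ℕ) : ℕ :=
  ((List.range (i+1)).takeWhile (fun k => w.getD (i-k) false)).length

/-- length of the maximal run of `d`'s starting at position `i`. -/
def downRunR (w : List Bool) (i : ℕ) : ℕ :=
  ((List.range (w.length - i)).takeWhile (fun k => !(w.getD (i+k) true))).length

/-- length of the maximal run of `d`'s ending at position `i`. -/
def downRunL (w : List Bool) (i : ℕ) : ℕ :=
  ((List.range (i+1)).takeWhile (fun k => !(w.getD (i-k) true))).length

/-- length of the maximal run of `u`'s starting at position `i`. -/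
def upRunR (w : List Bool) (i : ℕ) : ℕ :=
  ((List.range (w.length - i)).takeWhile (fun k => w.getD (i+k) false)).length

/-- The peak at `i` is symmetric: its maximal mountain `u^a d^b` has `a = b`. -/
def isSymPeakB (w : List Bool) (i : ℕ) : Bool :=
  isPeakB w i && (upRunL w i == downRunR w (i+1))

/-- The peak at `i` is asymmetric: its maximal mountain `u^a d^b` has `a ≠ b`. -/
def isAsymPeakB (w : List Bool) (i : ℕ) : Bool :=
  isPeakB w i && !(upRunL w i == downRunR w (i+1))

/-- weight of the peak at `i`: `min a b` for its maximal mountain `u^a d^b`. -/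
def peakWeight (w : List Bool) (i : ℕ) : ℕ :=
  min (upRunL w i) (downRunR w (i+1))

/-- The valley at `i` is symmetric: the maximal `d^a u^b` containing it has `a = b`. -/
def isSymValleyB (w : List Bool) (i : ℕ) : Bool :=
  isValleyB w i && (downRunL w i == upRunR w (i+1))

/-- weight of the valley at `i`: the largest `j` with `d^j u^j` through the valley. -/
def valleyWeight (w : List Bool) (i : ℕ) : ℕ :=
  min (downRunL w i) (upRunR w (i+1))

def peakCount (w : List Bool) : ℕ := ((List.range w.length).filter (isPeakB w)).length
def spCount (w : List Bool) : ℕ := ((List.range w.length).filter (isSymPeakB w)).length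
def apCount (w : List Bool) : ℕ := ((List.range w.length).filter (isAsymPeakB w)).length
def svalCount (w : List Bool) : ℕ := ((List.range w.length).filter (isSymValleyB w)).length

/-- total weight of the symmetric peaks of `w`. -/
def spWeight (w : List Bool) : ℕ :=
  (((List.range w.length).filter (isSymPeakB w)).map (peakWeight w)).sum

/-- total weight of the asymmetric peaks of `w`. -/
def apWeight (w : List Bool) : ℕ :=
  (((List.range w.length).filter (isAsymPeakB w)).map (peakWeight w)).sum

/-- total weight of the symmetric valleys of `w`. -/
def svWeight (w : List Bool) : ℕ :=
  (((List.range w.length).filter (isSymValleyB w)).map (valleyWeight w)).sum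

/-- positions of the peaks of `w`, from left to right. -/
def peakList (w : List Bool) : List ℕ := (List.range w.length).filter (isPeakB w)

/-- positions of the valleys of `w`, from left to right. -/
def valleyList (w : List Bool) : List ℕ := (List.range w.length).filter (isValleyB w)

/-- heights of the peaks of `w`, from left to right. -/
def peakHeights (w : List Bool) : List ℤ := (peakList w).map (fun i => hgt w (i+1))

/-- heights of the valleys of `w`, from left to right. -/
def valleyHeights (w : List Bool) : List ℤ := (valleyList w).map (fun i => hgt w (i+1))

/-- number of pairs of adjacent equal entries of a list. -/
def eqAdjCount (l : List ℤ) : ℕ :=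
  ((l.zip l.tail).filter (fun p => decide (p.1 = p.2))).length

/-- `sp'`: number of pairs of consecutive valleys of `w` at the same height. -/
def spPrime (w : List Bool) : ℕ := eqAdjCount (valleyHeights w)

/-- all Bool lists of length `m`, as a Finset. -/
def boolLists (m : ℕ) : Finset (List Bool) :=
  Finset.image (fun f : Fin m → Bool => List.ofFn f) Finset.univ

/-- The (finite) set of Dyck words of semilength `n`. -/
def dyckFinset (n : ℕ) : Finset (List Bool) :=
  (boolLists (2*n)).filter (fun w => IsDyckWord w)

open PowerSeries in
/-- the `q`-integer `[i]_z = 1 + z + ⋯ + z^{i−1}` as a power series. -/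
noncomputable def qint (i : ℕ) : PowerSeries ℚ := ∑ k ∈ Finset.range i, (X : PowerSeries ℚ) ^ k

/-- the `q`-factorial `[a]_z! = [a]_z [a−1]_z ⋯ [1]_z`. -/
noncomputable def qfact (a : ℕ) : PowerSeries ℚ := ∏ i ∈ Finset.range a, qint (i + 1)

/-!
Cut a Dyck path with strictly increasing peaks into blocks `dᶜ⁻¹uᶜ` followed by one final
descent: after each valley `dᵉ` the next ascent is longer than `e`, since the peaks increase, and
it is split into `dᵉuᵉ⁺¹` and single steps `u`. Each block raises the height by one, so the `i`-th
block starts at height `i - 1`, and staying above ground means exactly `cᵢ ≤ i`. This identifies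
the paths with the compositions `(c₁, …, cₘ)` of `n` with `cᵢ ≤ i`. Those with `m` parts are
counted by the coefficient of `zⁿ` in `∏ᵢ (z + ⋯ + zⁱ) = zᵐ [m]_z!`.
-/

open PowerSeries Finset

lemma hgt_zero (w : List Bool) : hgt w 0 = 0 := by simp [hgt]

lemma hgt_length (w : List Bool) : hgt w w.length = w.count true - w.count false := by
  simp [hgt]

lemma hgt_of_length_le {w : List Bool} {j : ℕ} (h : w.length ≤ j) : hgt w j = hgt w w.length := by
  simp only [hgt, List.take_of_length_le h, List.take_length]

lemma hgt_append (u v : List Bool) (j : ℕ) :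
    hgt (u ++ v) j = hgt u j + hgt v (j - u.length) := by
  simp only [hgt, List.take_append, List.count_append]
  push_cast
  ring

lemma hgt_cons_succ (b : Bool) (w : List Bool) (j : ℕ) :
    hgt (b :: w) (j + 1) = (if b then 1 else -1) + hgt w j := by
  cases b <;> simp [hgt] <;> ring

lemma hgt_succ_of_getElem {w : List Bool} {i : ℕ} (hi : i < w.length) (hu : w[i] = true) :
    hgt w (i + 1) = hgt w i + 1 := by
  simp only [hgt, ← List.take_concat_get' w i hi, hu, List.count_append,
    List.count_singleton_self, List.count_singleton, beq_false, Bool.not_true,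
    Bool.false_eq_true, if_false]
  push_cast
  ring

lemma hgt_replicate_false (e j : ℕ) : hgt (List.replicate e false) j = -(min j e : ℕ) := by
  simp [hgt, List.take_replicate, List.count_replicate]

lemma hgt_replicate_true (a j : ℕ) : hgt (List.replicate a true) j = (min j a : ℕ) := by
  simp [hgt, List.take_replicate, List.count_replicate]

lemma forall_le_hgt_append {m : ℤ} {u v : List Bool} :
    (∀ j, m ≤ hgt (u ++ v) j) ↔
      (∀ j, m ≤ hgt u j) ∧ ∀ j, m ≤ u.count true - u.count false + hgt v j := by
  simp only [hgt_append, ← hgt_length]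
  constructor
  · intro H
    refine ⟨fun j => ?_, fun j => ?_⟩
    · rcases le_total j u.length with hj | hj
      · simpa [Nat.sub_eq_zero_of_le hj, hgt_zero] using H j
      · simpa [hgt_of_length_le hj, hgt_zero] using H u.length
    · simpa [hgt_of_length_le (Nat.le_add_right _ j)] using H (u.length + j)
  · rintro ⟨Hu, Hv⟩ j
    rcases le_total j u.length with hj | hj
    · simpa [Nat.sub_eq_zero_of_le hj, hgt_zero] using Hu j
    · simpa [hgt_of_length_le hj] using Hv (j - u.length)

lemma count_true_replicate_append (e a : ℕ) (w : List Bool) :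
    (List.replicate e false ++ List.replicate a true ++ w).count true = a + w.count true := by
  simp [List.count_replicate]

lemma count_false_replicate_append (e a : ℕ) (w : List Bool) :
    (List.replicate e false ++ List.replicate a true ++ w).count false = e + w.count false := by
  simp [List.count_replicate]

lemma forall_le_hgt_replicate_append {m : ℤ} {e a : ℕ} {w : List Bool} :
    (∀ j, m ≤ hgt (List.replicate e false ++ List.replicate a true ++ w) j) ↔
      m ≤ -e ∧ ∀ j, m ≤ a - e + hgt w j := by
  simp only [forall_le_hgt_append, hgt_replicate_false, hgt_replicate_true, List.count_append,
    List.count_replicate_self, List.count_replicate, beq_true, beq_false, Bool.not_true,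
    Bool.false_eq_true, if_false, add_zero, zero_add]
  constructor
  · rintro ⟨⟨hd, -⟩, hw⟩
    exact ⟨by have := hd e; omega, fun j => by linarith [hw j]⟩
  · rintro ⟨he, hw⟩
    exact ⟨⟨fun j => by omega, fun j => by omega⟩, fun j => by linarith [hw j]⟩

lemma peakList_cons (b : Bool) (w : List Bool) :
    peakList (b :: w) =
      (if b && !w.getD 0 true then [0] else []) ++ (peakList w).map (· + 1) := by
  have hshift : isPeakB (b :: w) ∘ Nat.succ = isPeakB w := rfl
  have hzero : isPeakB (b :: w) 0 = (b && !w.getD 0 true) := rfl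
  rw [peakList, List.length_cons, List.range_succ_eq_map, List.filter_cons, List.filter_map,
    hshift, hzero]
  split <;> rfl

lemma peakHeights_nil : peakHeights [] = [] := rfl

lemma peakHeights_cons_false (w : List Bool) :
    peakHeights (false :: w) = (peakHeights w).map (· - 1) := by
  simp only [peakHeights, peakList_cons, Bool.false_and, Bool.false_eq_true, if_false,
    List.nil_append, List.map_map, Function.comp_def, hgt_cons_succ]
  exact List.map_congr_left fun _ _ => by ring

lemma peakHeights_cons_true (w : List Bool) :
    peakHeights (true :: w) =
      (if w.head? = some false then [1] else []) ++ (peakHeights w).map (· + 1) := by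
  simp only [peakHeights, peakList_cons, Bool.true_and, List.map_append, List.map_map,
    Function.comp_def, hgt_cons_succ, if_true]
  congr 1
  · cases w with
    | nil => rfl
    | cons b w => cases b <;> simp [hgt_zero]
  · exact List.map_congr_left fun _ _ => add_comm _ _

lemma peakHeights_replicate_false_append (e : ℕ) (w : List Bool) :
    peakHeights (List.replicate e false ++ w) = (peakHeights w).map (· - (e : ℤ)) := by
  induction e with
  | zero => simp
  | succ e ih =>
    rw [List.replicate_succ, List.cons_append, peakHeights_cons_false, ih, List.map_map]
    exact List.map_congr_left fun _ _ => by simp only [Function.comp_apply]; push_cast; ring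

lemma peakHeights_replicate_true_append (a : ℕ) (w : List Bool) :
    peakHeights (List.replicate (a + 1) true ++ w) =
      (if w.head? = some false then [(a + 1 : ℤ)] else []) ++
        (peakHeights w).map (· + ((a : ℤ) + 1)) := by
  induction a with
  | zero => simpa using peakHeights_cons_true w
  | succ a ih =>
    rw [List.replicate_succ, List.cons_append, peakHeights_cons_true, ih]
    simp only [List.head?_append, List.head?_replicate, Nat.add_one_ne_zero, if_false,
      Option.some_or, Option.some.injEq, Bool.true_eq_false, List.nil_append, List.map_append,
      List.map_map]
    push_cast
    split_ifs <;> simp [Function.comp_def, add_assoc]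

lemma lt_of_mem_peakHeights {m : ℤ} {w : List Bool} (hw : ∀ j, m ≤ hgt w j) {x : ℤ}
    (hx : x ∈ peakHeights w) : m < x := by
  obtain ⟨i, hi, rfl⟩ := List.mem_map.mp hx
  obtain ⟨hi, hpeak⟩ := List.mem_filter.mp hi
  rw [List.mem_range] at hi
  have hu : w[i] = true := by
    simp only [isPeakB, Bool.and_eq_true, List.getD_eq_getElem _ _ hi] at hpeak
    exact hpeak.1
  rw [hgt_succ_of_getElem hi hu]
  linarith [hw i]

lemma eq_replicate_or_exists_eq_replicate_append (w : List Bool) :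
    (∃ e, w = List.replicate e false) ∨
      ∃ e a r, w = List.replicate e false ++ List.replicate (a + 1) true ++ r ∧
        r.head? ≠ some true := by
  induction w with
  | nil => exact Or.inl ⟨0, rfl⟩
  | cons b w ih =>
    cases b with
    | false =>
      rcases ih with ⟨e, rfl⟩ | ⟨e, a, r, rfl, hr⟩
      · exact Or.inl ⟨e + 1, rfl⟩
      · exact Or.inr ⟨e + 1, a, r, by simp [List.replicate_succ], hr⟩
    | true =>
      right
      rcases ih with ⟨e, rfl⟩ | ⟨e, a, r, rfl, hr⟩
      · exact ⟨0, 0, List.replicate e false, by simp, by cases e <;> simp [List.replicate_succ]⟩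
      · cases e with
        | zero => exact ⟨0, a + 1, r, by simp [List.replicate_succ], hr⟩
        | succ e =>
          exact ⟨0, 0, List.replicate (e + 1) false ++ List.replicate (a + 1) true ++ r, rfl,
            by simp [List.replicate_succ]⟩

lemma replicate_false_append_cons_true_inj {e e' : ℕ} {x y : List Bool}
    (h : List.replicate e false ++ true :: x = List.replicate e' false ++ true :: y) :
    e = e' ∧ x = y := by
  induction e generalizing e' with
  | zero => cases e' <;> simp_all [List.replicate_succ]
  | succ e ih => cases e' <;> simp_all [List.replicate_succ]

/-- Heights are measured from the starting point, so the ground lies at `-h`; the `0` in front of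
the peak heights makes the first peak rise above the start. -/
def IsStrictPeakPath (h : ℕ) (w : List Bool) : Prop :=
  w.count false = w.count true + h ∧ (∀ j, -(h : ℤ) ≤ hgt w j) ∧
    (0 :: peakHeights w).Pairwise (· < ·)

lemma isStrictPeakPath_zero_iff {w : List Bool} :
    IsStrictPeakPath 0 w ↔ IsDyckWord w ∧ (peakHeights w).Pairwise (· < ·) := by
  simp only [IsStrictPeakPath, IsDyckWord, List.pairwise_cons, add_zero, Nat.cast_zero, neg_zero]
  constructor
  · rintro ⟨hcount, hfloor, -, hsorted⟩
    exact ⟨⟨hcount.symm, hfloor⟩, hsorted⟩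
  · rintro ⟨⟨hcount, hfloor⟩, hsorted⟩
    exact ⟨hcount.symm, hfloor, fun x hx => lt_of_mem_peakHeights hfloor hx, hsorted⟩

lemma IsStrictPeakPath.replicate_append {h e : ℕ} {w : List Bool}
    (hw : IsStrictPeakPath (h + 1) w) (he : e ≤ h) :
    IsStrictPeakPath h (List.replicate e false ++ List.replicate (e + 1) true ++ w) := by
  obtain ⟨hcount, hfloor, hpeaks⟩ := hw
  refine ⟨?_, forall_le_hgt_replicate_append.2 ⟨by omega, fun j => ?_⟩, ?_⟩
  · rw [count_false_replicate_append, count_true_replicate_append]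
    omega
  · have := hfloor j
    push_cast at this ⊢
    linarith
  · rw [List.append_assoc, peakHeights_replicate_false_append, peakHeights_replicate_true_append]
    simp only [List.pairwise_cons] at hpeaks
    split_ifs <;> simp [List.pairwise_cons, List.pairwise_map, hpeaks.2] <;> grind

lemma IsStrictPeakPath.of_replicate_append {h e a : ℕ} {r : List Bool} (hr : r.head? ≠ some true)
    (hw : IsStrictPeakPath h (List.replicate e false ++ List.replicate (a + 1) true ++ r)) :
    e ≤ h ∧ e ≤ a ∧ IsStrictPeakPath (h + 1 + (a - e)) r := by
  obtain ⟨hcount, hfloor, hpeaks⟩ := hw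
  rw [count_false_replicate_append, count_true_replicate_append] at hcount
  obtain ⟨heh, hfloor⟩ := forall_le_hgt_replicate_append.1 hfloor
  cases r with
  | nil =>
    simp only [List.count_nil] at hcount
    omega
  | cons b r =>
    obtain rfl : b = false := by simpa using hr
    have hshift : peakHeights (List.replicate e false ++ List.replicate (a + 1) true ++ false :: r)
        = (0 :: peakHeights (false :: r)).map (· + ((a : ℤ) + 1 - e)) := by
      rw [List.append_assoc, peakHeights_replicate_false_append, peakHeights_replicate_true_append]
      simp only [List.head?_cons, if_true, List.singleton_append, List.map_cons, List.map_map,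
        zero_add]
      congr 1
      exact List.map_congr_left fun _ _ => by simp only [Function.comp_apply]; ring
    rw [hshift, List.pairwise_cons, List.pairwise_map, List.pairwise_cons] at hpeaks
    obtain ⟨hfirst, hpos, hsorted⟩ := hpeaks
    have hea : e ≤ a := by
      have := hfirst _ (List.mem_map_of_mem List.mem_cons_self)
      omega
    refine ⟨by omega, hea, by omega, fun j => ?_,
      List.pairwise_cons.2 ⟨fun x hx => by linarith [hpos x hx], hsorted.imp fun h => by linarith⟩⟩
    have := hfloor j
    push_cast [Nat.cast_sub hea] at this ⊢
    linarith

def PartsBounded : ℕ → List ℕ → Prop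
  | _, [] => True
  | h, c :: t => 0 < c ∧ c ≤ h + 1 ∧ PartsBounded (h + 1) t

/-- The path starts at height `h`; each part `c` contributes `dᶜ⁻¹uᶜ`, a net rise of one. -/
def compositionPath : ℕ → List ℕ → List Bool
  | h, [] => List.replicate h false
  | h, c :: t =>
    List.replicate (c - 1) false ++ List.replicate c true ++ compositionPath (h + 1) t

lemma partsBounded_iff {h : ℕ} {t : List ℕ} :
    PartsBounded h t ↔ ∀ i < t.length, 0 < t.getD i 0 ∧ t.getD i 0 ≤ h + i + 1 := by
  induction t generalizing h with
  | nil => simp [PartsBounded]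
  | cons c t ih =>
    simp only [PartsBounded, ih, List.length_cons]
    constructor
    · rintro ⟨hc0, hc, ht⟩ (_ | i) hi
      · simpa using ⟨hc0, hc⟩
      · simpa [add_assoc, add_comm 1] using ht i (by omega)
    · intro H
      refine ⟨(H 0 (by omega)).1, by simpa using (H 0 (by omega)).2, fun i hi => ?_⟩
      simpa [add_assoc, add_comm 1] using H (i + 1) (by omega)

lemma partsBounded_replicate_one_append {h k : ℕ} {t : List ℕ} (ht : PartsBounded (h + k) t) :
    PartsBounded h (List.replicate k 1 ++ t) := by
  induction k generalizing h with
  | zero => simpa using ht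
  | succ k ih => exact ⟨one_pos, by omega, ih (by rwa [add_right_comm, add_assoc])⟩

lemma compositionPath_replicate_one_append (h k : ℕ) (t : List ℕ) :
    compositionPath h (List.replicate k 1 ++ t) =
      List.replicate k true ++ compositionPath (h + k) t := by
  induction k generalizing h with
  | zero => simp
  | succ k ih => simp [compositionPath, ih, List.replicate_succ, add_right_comm, add_assoc]

lemma count_true_compositionPath (h : ℕ) (t : List ℕ) :
    (compositionPath h t).count true = t.sum := by
  induction t generalizing h with
  | nil => simp [compositionPath, List.count_replicate]
  | cons c t ih => simp [compositionPath, List.count_replicate, ih]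

lemma isStrictPeakPath_compositionPath {h : ℕ} {t : List ℕ} (ht : PartsBounded h t) :
    IsStrictPeakPath h (compositionPath h t) := by
  induction t generalizing h with
  | nil =>
    have hpeaks := peakHeights_replicate_false_append h []
    rw [List.append_nil, peakHeights_nil] at hpeaks
    refine ⟨by simp [compositionPath, List.count_replicate], fun j => ?_, ?_⟩
    · simp [compositionPath, hgt_replicate_false]
    · simp [compositionPath, hpeaks]
  | cons c t ih =>
    obtain ⟨hc0, hc, ht⟩ := ht
    obtain ⟨e, rfl⟩ : ∃ e, c = e + 1 := ⟨c - 1, by omega⟩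
    exact (ih ht).replicate_append (by omega)

lemma exists_compositionPath_eq {h : ℕ} {w : List Bool} (hw : IsStrictPeakPath h w) :
    ∃ t, PartsBounded h t ∧ compositionPath h t = w := by
  induction hlen : w.length using Nat.strong_induction_on generalizing h w with
  | _ N ih =>
    rcases eq_replicate_or_exists_eq_replicate_append w with ⟨e, rfl⟩ | ⟨e, a, r, rfl, hr⟩
    · have he : e = h := by simpa [List.count_replicate] using hw.1
      exact ⟨[], trivial, by rw [compositionPath, he]⟩
    · obtain ⟨heh, hea, hr⟩ := hw.of_replicate_append hr
      obtain ⟨t, ht, rfl⟩ := ih r.length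
        (by simp only [← hlen, List.length_append, List.length_replicate]; omega) hr rfl
      refine ⟨(e + 1) :: (List.replicate (a - e) 1 ++ t),
        ⟨e.succ_pos, by omega, partsBounded_replicate_one_append ht⟩, ?_⟩
      have hups : e + 1 + (a - e) = a + 1 := by omega
      simp only [compositionPath, add_tsub_cancel_right, compositionPath_replicate_one_append,
        List.append_assoc, List.append_cancel_left_eq]
      rw [← List.append_assoc, ← List.replicate_add, hups]

lemma injOn_compositionPath (h : ℕ) : Set.InjOn (compositionPath h) {t | PartsBounded h t} := by
  intro t ht t' ht' heq
  induction t generalizing h t' with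
  | nil =>
    cases t' with
    | nil => rfl
    | cons c' t' =>
      have hsum := congrArg (List.count true) heq
      simp only [count_true_compositionPath, List.sum_nil, List.sum_cons] at hsum
      exact absurd ht'.1 (by omega)
  | cons c t ih =>
    cases t' with
    | nil =>
      have hsum := congrArg (List.count true) heq
      simp only [count_true_compositionPath, List.sum_nil, List.sum_cons] at hsum
      exact absurd ht.1 (by omega)
    | cons c' t' =>
      obtain ⟨hc0, -, ht⟩ := ht
      obtain ⟨hc0', -, ht'⟩ := ht'
      obtain ⟨e, rfl⟩ : ∃ e, c = e + 1 := ⟨c - 1, by omega⟩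
      obtain ⟨e', rfl⟩ : ∃ e', c' = e' + 1 := ⟨c' - 1, by omega⟩
      simp only [compositionPath, Nat.add_sub_cancel, List.replicate_succ, List.append_assoc,
        List.cons_append] at heq
      obtain ⟨rfl, heq⟩ := replicate_false_append_cons_true_inj heq
      rw [ih _ ht ht' (List.append_cancel_left heq)]

def boundedCompositions (n : ℕ) : Set (List ℕ) :=
  {l | l.sum = n ∧ ∀ i < l.length, 0 < l.getD i 0 ∧ l.getD i 0 ≤ i + 1}

lemma mem_boundedCompositions {n : ℕ} {l : List ℕ} :
    l ∈ boundedCompositions n ↔ l.sum = n ∧ PartsBounded 0 l := by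
  simp [boundedCompositions, partsBounded_iff]

lemma mem_dyckFinset {n : ℕ} {w : List Bool} :
    w ∈ dyckFinset n ↔ w.length = 2 * n ∧ IsDyckWord w := by
  simp only [dyckFinset, boolLists, mem_filter, mem_image, mem_univ, true_and]
  constructor
  · rintro ⟨⟨f, rfl⟩, hw⟩
    exact ⟨List.length_ofFn, hw⟩
  · rintro ⟨hlen, hw⟩
    rw [← hlen]
    exact ⟨⟨w.get, List.ofFn_get w⟩, hw⟩

theorem card_strictPeakDyck_eq_ncard_boundedCompositions (n : ℕ) :
    #{w ∈ dyckFinset n | (peakHeights w).Pairwise (· < ·)} = (boundedCompositions n).ncard := by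
  rw [← Set.ncard_coe_finset]
  symm
  refine Set.ncard_congr (fun t _ => compositionPath 0 t) (fun t ht => ?_)
    (fun t t' ht ht' => injOn_compositionPath 0 (mem_boundedCompositions.1 ht).2
      (mem_boundedCompositions.1 ht').2) (fun w hw => ?_)
  · obtain ⟨hsum, ht⟩ := mem_boundedCompositions.1 ht
    obtain ⟨hdyck, hsorted⟩ := isStrictPeakPath_zero_iff.1 (isStrictPeakPath_compositionPath ht)
    refine mem_filter.2 ⟨mem_dyckFinset.2 ⟨?_, hdyck⟩, hsorted⟩
    rw [← List.count_true_add_count_false, ← hdyck.1, count_true_compositionPath, hsum, two_mul]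
  · obtain ⟨hw, hsorted⟩ := mem_filter.1 hw
    obtain ⟨hlen, hdyck⟩ := mem_dyckFinset.1 hw
    obtain ⟨t, ht, rfl⟩ :=
      exists_compositionPath_eq (isStrictPeakPath_zero_iff.2 ⟨hdyck, hsorted⟩)
    refine ⟨t, mem_boundedCompositions.2 ⟨?_, ht⟩, rfl⟩
    have hlen' := List.count_true_add_count_false (compositionPath 0 t)
    rw [← hdyck.1, count_true_compositionPath] at hlen'
    omega

def boundedTuples (a n : ℕ) : Finset (Fin a → ℕ) :=
  {c ∈ Fintype.piFinset fun i : Fin a => Icc 1 ((i : ℕ) + 1) | ∑ i, c i = n}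

lemma X_mul_qint (i : ℕ) : X * qint i = ∑ k ∈ Icc 1 i, (X : ℚ⟦X⟧) ^ k := by
  rw [qint, mul_sum, ← Ico_add_one_right_eq_Icc, sum_Ico_eq_sum_range, Nat.add_sub_cancel]
  exact sum_congr rfl fun k _ => by ring

lemma X_pow_mul_qfact (a : ℕ) :
    X ^ a * qfact a = ∑ c ∈ Fintype.piFinset (fun i : Fin a => Icc 1 ((i : ℕ) + 1)),
      (X : ℚ⟦X⟧) ^ ∑ i, c i := by
  simp_rw [qfact, prod_range (fun i => qint (i + 1)), ← prod_pow_eq_pow_sum, ← prod_univ_sum,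
    ← X_mul_qint, prod_mul_distrib, prod_const, card_univ, Fintype.card_fin]

lemma coeff_X_pow_mul_qfact (a n : ℕ) :
    coeff n ((X : ℚ⟦X⟧) ^ a * qfact a) = #(boundedTuples a n) := by
  simp [X_pow_mul_qfact, coeff_X_pow, boundedTuples, eq_comm]

lemma boundedCompositions_eq_preimage (n : ℕ) :
    boundedCompositions n =
      List.equivSigmaTuple ⁻¹' ↑((range (n + 1)).sigma fun a => boundedTuples a n) := by
  ext l
  change _ ↔ (⟨l.length, l.get⟩ : Σ a, Fin a → ℕ) ∈ (range (n + 1)).sigma _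
  simp only [boundedCompositions, boundedTuples, Set.mem_ofPred_eq, mem_sigma, mem_range,
    mem_filter, Fintype.mem_piFinset, mem_Icc, List.get_eq_getElem, Fin.sum_univ_getElem,
    Fin.forall_iff]
  constructor
  · rintro ⟨hsum, hparts⟩
    have hparts' : ∀ i (h : i < l.length), 1 ≤ l[i] ∧ l[i] ≤ i + 1 := fun i h => by
      simpa only [List.getD_eq_getElem _ _ h, Nat.one_le_iff_ne_zero, Nat.pos_iff_ne_zero]
        using hparts i h
    have hlen : l.length ≤ l.sum := List.length_le_sum_of_one_le l fun x hx => by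
      obtain ⟨i, h, rfl⟩ := List.getElem_of_mem hx
      exact (hparts' i h).1
    exact ⟨by omega, hparts', hsum⟩
  · rintro ⟨-, hparts, hsum⟩
    exact ⟨hsum, fun i h => by
      simpa only [List.getD_eq_getElem _ _ h, Nat.one_le_iff_ne_zero, Nat.pos_iff_ne_zero]
        using hparts i h⟩

lemma ncard_boundedCompositions (n : ℕ) :
    (boundedCompositions n).ncard = ∑ a ∈ range (n + 1), #(boundedTuples a n) := by
  rw [boundedCompositions_eq_preimage, ← Equiv.image_symm_eq_preimage,
    Set.ncard_image_of_injective _ List.equivSigmaTuple.symm.injective, Set.ncard_coe_finset,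
    card_sigma]

open PowerSeries in
/-- The generating function for Dyck paths with strictly
increasing peak heights is `Σ_{a≥0} z^a [a]_z!` (an equality of coefficients,
the sum being finite in each degree); moreover, the number of such paths of
semilength `n` equals the number of compositions `(c₁,…,c_m)` of `n` with
`c_i ≤ i` for all `i`. -/
theorem strictly_increasing_peaks_gf :
    (∀ n : ℕ,
      ((((dyckFinset n).filter
          (fun w => (peakHeights w).Pairwise (· < ·))).card : ℚ)) =
        ∑ a ∈ Finset.range (n + 1), (coeff n) ((X : PowerSeries ℚ) ^ a * qfact a)) ∧
    (∀ n : ℕ,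
      ((dyckFinset n).filter (fun w => (peakHeights w).Pairwise (· < ·))).card =
        Set.ncard {l : List ℕ | l.sum = n ∧
          ∀ i < l.length, 0 < l.getD i 0 ∧ l.getD i 0 ≤ i + 1}) := by
  refine ⟨fun n => ?_, card_strictPeakDyck_eq_ncard_boundedCompositions⟩
  rw [card_strictPeakDyck_eq_ncard_boundedCompositions, ncard_boundedCompositions]
  push_cast
  simp only [coeff_X_pow_mul_qfact]
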